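/- A left-linear term rewriting system that is the union of two confluent left- and right-linear TRSs with no critical pairs between a rule of one and a rule of the other is confluent. -/

import Mathlib

/-!
Without critical pairs between the two systems, in a peak `u ←₁ t →₂ v` the two redexes either
lie in different arguments of a common symbol, or one of them lies inside the substitution part
of the other. In the second case left-linearity keeps the outer redex an instance of its rule
after the inner step, and right-linearity means the inner step is copied at most once. So the
peak closes with at most one step on each side: the one-step relations subcommute, hence their
reflexive-transitive closures commute, and the Hindley–Rosen lemma makes the union of two
commuting confluent relations confluent.
-/

/-- Ground first-order terms over a signature `F`. -/
inductive GTerm (F : Type) : Type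
  | node : F → List (GTerm F) → GTerm F

/-- First-order terms over symbols `F` and variables `V`. -/
inductive Tm (F : Type) (V : Type) : Type
  | var : V → Tm F V
  | node : F → List (Tm F V) → Tm F V

/-- Application of a ground substitution to a term. -/
def substG {F V : Type} (σ : V → GTerm F) : Tm F V → GTerm F
  | .var v => σ v
  | .node f ts => .node f (ts.attach.map (fun t => substG σ t.1))
termination_by t => sizeOf t
decreasing_by
  have := List.sizeOf_lt_of_mem t.2
  simp only [Tm.node.sizeOf_spec]
  omega

/-- Application of a (term-valued) substitution to a term. -/
def substT {F V : Type} (σ : V → Tm F V) : Tm F V → Tm F V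
  | .var v => σ v
  | .node f ts => .node f (ts.attach.map (fun t => substT σ t.1))
termination_by t => sizeOf t
decreasing_by
  have := List.sizeOf_lt_of_mem t.2
  simp only [Tm.node.sizeOf_spec]
  omega

/-- The list of occurrences of variables in a term (with multiplicities). -/
def varOccs {F V : Type} : Tm F V → List V
  | .var v => [v]
  | .node _ ts => ts.attach.foldr (fun t acc => varOccs t.1 ++ acc) []
termination_by t => sizeOf t
decreasing_by
  have := List.sizeOf_lt_of_mem t.2
  simp only [Tm.node.sizeOf_spec]
  omega

/-- Well-formedness of a rewrite rule: `vars r ⊆ vars l`. -/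
def RuleWF {F V : Type} (p : Tm F V × Tm F V) : Prop :=
  ∀ v, v ∈ varOccs p.2 → v ∈ varOccs p.1

/-- A term is linear if every variable occurs in it at most once. -/
def LinearTm {F V : Type} (t : Tm F V) : Prop := (varOccs t).Nodup

/-- A rule is linear if both its left- and right-hand sides are linear. -/
def LinearRule {F V : Type} (p : Tm F V × Tm F V) : Prop :=
  LinearTm p.1 ∧ LinearTm p.2

/-- Subterm relation on terms. -/
inductive Subterm {F V : Type} : Tm F V → Tm F V → Prop
  | refl {t} : Subterm t t
  | child {f : F} {ts : List (Tm F V)} {t u} : t ∈ ts → Subterm u t →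
      Subterm u (.node f ts)

/-- `Overlap R₁ R₂` : some rule of `R₁` overlaps with some rule of `R₂`, i.e.
a non-variable subterm of the left-hand side of a rule of `R₁` is unifiable
(after renaming the rules apart, which is accounted for by using two
independent substitutions) with the left-hand side of a rule of `R₂`;
this is the existence of a critical pair between the two systems. -/
def Overlap {F V : Type} (R₁ R₂ : Set (Tm F V × Tm F V)) : Prop :=
  ∃ p₁ ∈ R₁, ∃ p₂ ∈ R₂, ∃ u : Tm F V,
    Subterm u p₁.1 ∧ (∀ v : V, u ≠ .var v) ∧
    ∃ σ₁ σ₂ : V → Tm F V, substT σ₁ u = substT σ₂ p₂.1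

/-- One-step rewriting of ground terms with the TRS `R`. -/
inductive Red {F V : Type} (R : Set (Tm F V × Tm F V)) :
    GTerm F → GTerm F → Prop
  | root {l r : Tm F V} (σ : V → GTerm F) : (l, r) ∈ R →
      Red R (substG σ l) (substG σ r)
  | sub {f : F} {pre post : List (GTerm F)} {t t'} : Red R t t' →
      Red R (.node f (pre ++ t :: post)) (.node f (pre ++ t' :: post))

/-- Many-step rewriting. -/
def Reds {F V : Type} (R : Set (Tm F V × Tm F V)) : GTerm F → GTerm F → Prop :=
  Relation.ReflTransGen (Red R)

/-- Confluence of a TRS (on ground terms). -/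
def Confluent {F V : Type} (R : Set (Tm F V × Tm F V)) : Prop :=
  ∀ a b c : GTerm F, Reds R a b → Reds R a c → ∃ d, Reds R b d ∧ Reds R c d

namespace Relation

variable {α : Type*} {r s : α → α → Prop}

def Commute (r s : α → α → Prop) : Prop :=
  ∀ ⦃a b c⦄, r a b → s a c → ∃ d, s b d ∧ r c d

def Subcommute (r s : α → α → Prop) : Prop :=
  ∀ ⦃a b c⦄, r a b → s a c → ∃ d, ReflGen s b d ∧ ReflGen r c d

theorem Commute.subcommute (h : Commute r s) : Subcommute r s := fun _ _ _ hab hac =>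
  let ⟨d, hbd, hcd⟩ := h hab hac
  ⟨d, .single hbd, .single hcd⟩

theorem Subcommute.strip (h : Subcommute r s) {a b c : α} (hab : r a b)
    (hac : ReflTransGen s a c) : ∃ d, ReflTransGen s b d ∧ ReflGen r c d := by
  induction hac with
  | refl => exact ⟨b, .refl, .single hab⟩
  | tail _ hcc' ih =>
    obtain ⟨d, hbd, hcd⟩ := ih
    cases hcd with
    | refl => exact ⟨_, hbd.tail hcc', .refl⟩
    | single hcd =>
      obtain ⟨e, hde, hc'e⟩ := h hcd hcc'
      exact ⟨e, hbd.trans hde.to_reflTransGen, hc'e⟩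

theorem Subcommute.reflTransGen (h : Subcommute r s) :
    Commute (ReflTransGen r) (ReflTransGen s) := by
  intro a b c hab hac
  induction hab with
  | refl => exact ⟨c, hac, .refl⟩
  | tail _ hbb' ih =>
    obtain ⟨d, hbd, hcd⟩ := ih
    obtain ⟨e, hb'e, hde⟩ := h.strip hbb' hbd
    exact ⟨e, hb'e, hcd.trans hde.to_reflTransGen⟩

theorem reflTransGen_sup_eq_reflTransGen_comp :
    ReflTransGen (r ⊔ s) = ReflTransGen (Comp (ReflTransGen r) (ReflTransGen s)) := by
  refine le_antisymm (reflTransGen_closed fun a b hab => ?_) (reflTransGen_closed ?_)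
  · rcases hab with hab | hab
    · exact .single ⟨b, .single hab, .refl⟩
    · exact .single ⟨a, .refl, .single hab⟩
  · rintro a b ⟨c, hac, hcb⟩
    exact (ReflTransGen.mono le_sup_left _ _ hac).trans (ReflTransGen.mono le_sup_right _ _ hcb)

/-- Hindley–Rosen lemma; `Commute (ReflTransGen r) (ReflTransGen r)` is confluence of `r`. -/
theorem Commute.reflTransGen_sup (hr : Commute (ReflTransGen r) (ReflTransGen r))
    (hs : Commute (ReflTransGen s) (ReflTransGen s))
    (hrs : Commute (ReflTransGen r) (ReflTransGen s)) :
    Commute (ReflTransGen (r ⊔ s)) (ReflTransGen (r ⊔ s)) := by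
  have hdiamond : Commute (Comp (ReflTransGen r) (ReflTransGen s))
      (Comp (ReflTransGen r) (ReflTransGen s)) := by
    rintro a b c ⟨x, hax, hxb⟩ ⟨y, hay, hyc⟩
    obtain ⟨z, hxz, hyz⟩ := hr hax hay
    obtain ⟨b', hzb', hbb'⟩ := hrs hxz hxb
    obtain ⟨c', hzc', hcc'⟩ := hrs hyz hyc
    obtain ⟨d, hb'd, hc'd⟩ := hs hzb' hzc'
    exact ⟨d, ⟨b', hbb', hb'd⟩, ⟨c', hcc', hc'd⟩⟩
  rw [reflTransGen_sup_eq_reflTransGen_comp]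
  exact hdiamond.subcommute.reflTransGen

end Relation

section Terms

variable {F V : Type}

@[elab_as_elim, induction_eliminator]
theorem Tm.induction {motive : Tm F V → Prop} (var : ∀ v, motive (.var v))
    (node : ∀ f ts, (∀ t ∈ ts, motive t) → motive (.node f ts)) : ∀ t, motive t
  | .var v => var v
  | .node f ts => node f ts fun t _ => Tm.induction var node t

@[elab_as_elim, induction_eliminator]
theorem GTerm.induction {motive : GTerm F → Prop}
    (node : ∀ f ts, (∀ t ∈ ts, motive t) → motive (.node f ts)) : ∀ t, motive t
  | .node f ts => node f ts fun t _ => GTerm.induction node t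

def GTerm.toTm : GTerm F → Tm F V
  | .node f ts => .node f (ts.attach.map fun ⟨t, _⟩ => t.toTm)

theorem GTerm.toTm_node (f : F) (ts : List (GTerm F)) :
    (GTerm.node f ts).toTm = (.node f (ts.map toTm) : Tm F V) := by
  rw [GTerm.toTm]; simp

theorem substG_node (σ : V → GTerm F) (f : F) (ts : List (Tm F V)) :
    substG σ (.node f ts) = .node f (ts.map (substG σ)) := by
  rw [substG]; simp

theorem substT_node (σ : V → Tm F V) (f : F) (ts : List (Tm F V)) :
    substT σ (.node f ts) = .node f (ts.map (substT σ)) := by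
  rw [substT]; simp

theorem varOccs_node (f : F) (ts : List (Tm F V)) :
    varOccs (.node f ts) = ts.flatMap varOccs := by
  rw [varOccs]
  induction ts with
  | nil => rfl
  | cons t ts ih => simp [List.attach_cons, List.foldr_map, ← ih]

theorem toTm_substG (σ : V → GTerm F) (t : Tm F V) :
    (substG σ t).toTm = substT (fun v => (σ v).toTm) t := by
  induction t with
  | var v => rw [substG, substT]
  | node f ts ih =>
    rw [substG_node, substT_node, GTerm.toTm_node, List.map_map]
    exact congrArg _ (List.map_congr_left ih)

section Rewriting

variable {R : Set (Tm F V × Tm F V)} {f : F}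

theorem Red.mono {S : Set (Tm F V × Tm F V)} (hRS : R ⊆ S) {a b : GTerm F} (h : Red R a b) :
    Red S a b := by
  induction h with
  | root σ hmem => exact .root σ (hRS hmem)
  | sub _ ih => exact .sub ih

theorem red_union (R₁ R₂ : Set (Tm F V × Tm F V)) : Red (R₁ ∪ R₂) = Red R₁ ⊔ Red R₂ := by
  refine le_antisymm (fun a b h => ?_) (sup_le (fun _ _ => Red.mono Set.subset_union_left)
    (fun _ _ => Red.mono Set.subset_union_right))
  induction h with
  | root σ hmem => exact hmem.imp (Red.root σ) (Red.root σ)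
  | sub _ ih => exact ih.imp Red.sub Red.sub

theorem Red.node_set {ts : List (GTerm F)} {i : ℕ} {t t' : GTerm F} (hi : ts[i]? = some t)
    (h : Red R t t') : Red R (.node f ts) (.node f (ts.set i t')) := by
  obtain ⟨hlt, rfl⟩ := List.getElem?_eq_some_iff.1 hi
  obtain ⟨pre, post, hts, -, hset⟩ := List.exists_of_set (a' := t') hlt
  rw [hset]
  conv_lhs => rw [hts]
  exact .sub h

theorem reflGen_red_node_set {ts : List (GTerm F)} {i : ℕ} {t t' : GTerm F}
    (hi : ts[i]? = some t) (h : Relation.ReflGen (Red R) t t') :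
    Relation.ReflGen (Red R) (.node f ts) (.node f (ts.set i t')) := by
  cases h with
  | refl =>
    obtain ⟨hlt, rfl⟩ := List.getElem?_eq_some_iff.1 hi
    rw [List.set_getElem_self]
  | single h => exact .single (Red.node_set hi h)

theorem Red.cases_node {ts : List (GTerm F)} {u : GTerm F} (h : Red R (.node f ts) u) :
    (∃ l r σ, (l, r) ∈ R ∧ substG σ l = .node f ts ∧ u = substG σ r) ∨
      ∃ i t t', ts[i]? = some t ∧ Red R t t' ∧ u = .node f (ts.set i t') := by
  generalize hg : GTerm.node f ts = g at h
  cases h with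
  | root σ hmem => exact .inl ⟨_, _, σ, hmem, rfl, rfl⟩
  | @sub _ pre _ _ _ h =>
    injection hg with hf hts
    subst hf hts
    exact .inr ⟨pre.length, _, _, by simp, h, by simp⟩

end Rewriting

section Linear

variable {f : F} {ts : List (Tm F V)}

theorem LinearTm.of_mem (h : LinearTm (.node f ts)) {t : Tm F V} (ht : t ∈ ts) : LinearTm t := by
  unfold LinearTm at h
  rw [varOccs_node, List.nodup_flatMap] at h
  exact h.1 t ht

theorem LinearTm.index_eq_of_mem_varOccs (h : LinearTm (.node f ts)) {i j : ℕ} {a b : Tm F V}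
    {x : V} (ha : ts[i]? = some a) (hb : ts[j]? = some b) (hxa : x ∈ varOccs a)
    (hxb : x ∈ varOccs b) : i = j := by
  unfold LinearTm at h
  rw [varOccs_node, List.nodup_flatMap, List.pairwise_iff_getElem] at h
  obtain ⟨hi, rfl⟩ := List.getElem?_eq_some_iff.1 ha
  obtain ⟨hj, rfl⟩ := List.getElem?_eq_some_iff.1 hb
  rcases lt_trichotomy i j with hij | hij | hij
  · exact (h.2 i j hi hj hij hxa hxb).elim
  · exact hij
  · exact (h.2 j i hj hi hij hxb hxa).elim

variable [DecidableEq V] {σ : V → GTerm F} {x : V} {s : GTerm F}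

theorem substG_update_of_not_mem {t : Tm F V} (hx : x ∉ varOccs t) :
    substG (Function.update σ x s) t = substG σ t := by
  induction t with
  | var v =>
    rw [substG, substG, Function.update_of_ne]
    simpa [varOccs, eq_comm] using hx
  | node f ts ih =>
    rw [substG_node, substG_node]
    refine congrArg _ (List.map_congr_left fun t ht => ih t ht fun hxt => hx ?_)
    rw [varOccs_node]
    exact List.mem_flatMap.2 ⟨t, ht, hxt⟩

theorem substG_update_node (h : LinearTm (.node f ts)) {i : ℕ} {a : Tm F V}
    (ha : ts[i]? = some a) (hx : x ∈ varOccs a) :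
    substG (Function.update σ x s) (.node f ts) =
      .node f ((ts.map (substG σ)).set i (substG (Function.update σ x s) a)) := by
  rw [substG_node]
  congr 1
  refine List.ext_getElem? fun j => ?_
  rw [List.getElem?_set, List.getElem?_map, List.getElem?_map, List.length_map]
  by_cases hij : i = j
  · subst hij
    obtain ⟨hi, rfl⟩ := List.getElem?_eq_some_iff.1 ha
    simp [hi]
  · rw [if_neg hij]
    cases hb : ts[j]? with
    | none => rfl
    | some b =>
      have hxb : x ∉ varOccs b := fun hxb => hij (h.index_eq_of_mem_varOccs ha hb hx hxb)
      simp [substG_update_of_not_mem hxb]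

theorem reflGen_red_substG_update {B : Set (Tm F V × Tm F V)} (hs : Red B (σ x) s) {t : Tm F V}
    (ht : LinearTm t) :
    Relation.ReflGen (Red B) (substG σ t) (substG (Function.update σ x s) t) := by
  induction t with
  | var v =>
    rw [substG, substG]
    by_cases hv : v = x
    · subst hv
      rw [Function.update_self]
      exact .single hs
    · rw [Function.update_of_ne hv]
  | node f ts ih =>
    by_cases hx : x ∈ varOccs (.node f ts)
    · rw [varOccs_node] at hx
      obtain ⟨a, ha, hxa⟩ := List.mem_flatMap.1 hx
      obtain ⟨i, hi⟩ := List.mem_iff_getElem?.1 ha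
      rw [substG_update_node ht hi hxa, substG_node]
      exact reflGen_red_node_set (by simp [hi]) (ih a ha (ht.of_mem ha))
    · rw [substG_update_of_not_mem hx]

end Linear

def OverlapsWith (l : Tm F V) (B : Set (Tm F V × Tm F V)) : Prop :=
  ∃ u : Tm F V, Subterm u l ∧ (∀ v, u ≠ .var v) ∧
    ∃ p ∈ B, ∃ σ₁ σ₂ : V → Tm F V, substT σ₁ u = substT σ₂ p.1

section Orthogonal

variable {A B : Set (Tm F V × Tm F V)}

theorem exists_red_update_of_red_substG [DecidableEq V] {l : Tm F V} (hl : LinearTm l)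
    (hov : ¬OverlapsWith l B) {σ : V → GTerm F} {t' : GTerm F} (h : Red B (substG σ l) t') :
    ∃ x ∈ varOccs l, ∃ s, Red B (σ x) s ∧ t' = substG (Function.update σ x s) l := by
  induction l generalizing t' with
  | var v => exact ⟨v, by simp [varOccs], t', by rwa [substG] at h, by simp [substG]⟩
  | node f ts ih =>
    rw [substG_node] at h
    rcases h.cases_node with ⟨l₂, r₂, τ, hmem, heq, -⟩ | ⟨i, s, s', hi, hs, rfl⟩
    · refine (hov ⟨.node f ts, .refl, fun _ => nofun, (l₂, r₂), hmem,
        fun v => (σ v).toTm, fun v => (τ v).toTm, ?_⟩).elim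
      -- a ground unifier of `node f ts` and `l₂` is in particular a unifier over `Tm F V`
      rw [← toTm_substG, ← toTm_substG, substG_node, heq]
    · obtain ⟨a, ha, rfl⟩ : ∃ a, ts[i]? = some a ∧ substG σ a = s := by simpa using hi
      have ha' := List.mem_of_getElem? ha
      obtain ⟨x, hx, s, hxs, rfl⟩ := ih a ha' (hl.of_mem ha')
        (fun ⟨u, hu, hov'⟩ => hov ⟨u, .child ha' hu, hov'⟩) hs
      refine ⟨x, ?_, s, hxs, (substG_update_node hl ha hx).symm⟩
      rw [varOccs_node]
      exact List.mem_flatMap.2 ⟨a, ha', hx⟩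

theorem exists_reflGen_red_of_red_substG_lhs (hAB : ¬Overlap A B) {l r : Tm F V}
    (hlr : (l, r) ∈ A) (hlin : LinearRule (l, r)) {σ : V → GTerm F} {v : GTerm F}
    (hv : Red B (substG σ l) v) :
    ∃ w, Relation.ReflGen (Red B) (substG σ r) w ∧ Red A v w := by
  classical
  have hov : ¬OverlapsWith l B := fun ⟨u, hu, hnv, p, hp, hunif⟩ =>
    hAB ⟨(l, r), hlr, p, hp, u, hu, hnv, hunif⟩
  obtain ⟨x, -, s, hxs, rfl⟩ := exists_red_update_of_red_substG hlin.1 hov hv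
  exact ⟨_, reflGen_red_substG_update hxs hlin.2, .root _ hlr⟩

theorem red_subcommute (hA : ∀ p ∈ A, LinearRule p) (hB : ∀ p ∈ B, LinearRule p)
    (hAB : ¬Overlap A B) (hBA : ¬Overlap B A) : Relation.Subcommute (Red A) (Red B) := by
  intro t
  induction t with | node f ts ih => ?_
  intro u v hu hv
  rcases hu.cases_node with ⟨l, r, σ, hlr, heq, rfl⟩ | ⟨i, s, s', hi, hs, rfl⟩
  · obtain ⟨w, hrw, hvw⟩ := exists_reflGen_red_of_red_substG_lhs hAB hlr (hA _ hlr) (heq ▸ hv)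
    exact ⟨w, hrw, .single hvw⟩
  rcases hv.cases_node with ⟨l, r, σ, hlr, heq, rfl⟩ | ⟨j, t, t', hj, ht, rfl⟩
  · obtain ⟨w, hrw, huw⟩ := exists_reflGen_red_of_red_substG_lhs hBA hlr (hB _ hlr)
      (heq ▸ Red.node_set hi hs)
    exact ⟨w, .single huw, hrw⟩
  by_cases hij : i = j
  · subst hij
    obtain rfl : s = t := Option.some_injective _ (hi.symm.trans hj)
    obtain ⟨w, hs'w, ht'w⟩ := ih s (List.mem_of_getElem? hi) hs ht
    have hlt := (List.getElem?_eq_some_iff.1 hi).1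
    refine ⟨.node f (ts.set i w), ?_, ?_⟩
    · rw [← List.set_set s' (b := w) (l := ts)]
      exact reflGen_red_node_set (List.getElem?_set_self hlt) hs'w
    · rw [← List.set_set t' (b := w) (l := ts)]
      exact reflGen_red_node_set (List.getElem?_set_self hlt) ht'w
  · refine ⟨.node f ((ts.set i s').set j t'), .single (Red.node_set ?_ ht), .single ?_⟩
    · rwa [List.getElem?_set_ne hij]
    · rw [List.set_comm _ _ hij]
      exact Red.node_set (by rwa [List.getElem?_set_ne (Ne.symm hij)]) hs

end Orthogonal

end Terms

theorem union_confluent_of_mutually_orthogonal_general {F V : Type}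
    (R₁ R₂ : Set (Tm F V × Tm F V))
    (hlin : ∀ p ∈ R₁ ∪ R₂, LinearRule p)
    (hc₁ : Confluent R₁) (hc₂ : Confluent R₂)
    (h₁₂ : ¬ Overlap R₁ R₂) (h₂₁ : ¬ Overlap R₂ R₁) :
    Confluent (R₁ ∪ R₂) := by
  have hcomm : Relation.Commute (Reds R₁) (Reds R₂) :=
    (red_subcommute (fun p hp => hlin p (.inl hp)) (fun p hp => hlin p (.inr hp))
      h₁₂ h₂₁).reflTransGen
  have hunion := Relation.Commute.reflTransGen_sup hc₁ hc₂ hcomm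
  rwa [← red_union] at hunion

/-- the union of two linear (left- and right-linear) confluent
TRSs with no critical pairs between a rule of one and a rule of the other is
confluent. -/
theorem union_confluent_of_mutually_orthogonal {F V : Type}
    (R₁ R₂ : Set (Tm F V × Tm F V))
    (hwf : ∀ p ∈ R₁ ∪ R₂, RuleWF p)
    (hlin : ∀ p ∈ R₁ ∪ R₂, LinearRule p)
    (hc₁ : Confluent R₁) (hc₂ : Confluent R₂)
    (h₁₂ : ¬ Overlap R₁ R₂) (h₂₁ : ¬ Overlap R₂ R₁) :
    Confluent (R₁ ∪ R₂) :=
  union_confluent_of_mutually_orthogonal_general R₁ R₂ hlin hc₁ hc₂ h₁₂ h₂₁
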